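/- arXiv:1804.06301 — 2 statements merged into one kernel-verified Lean document; each statement's English description precedes it below -/
import Mathlib

section
/- For every real a ≠ 0, shift τ_p, and all τ ≠ τ_p, the function Φ(τ) = a·coth(a(τ - τ_p)/2) satisfies the ODE Φ''' + Φ·Φ'' + (Φ')² = 0 (the case m = 1/2), and this solution blows up as τ → τ_p. -/
open Real Filter Topology

/-!
Away from `τp`, `Φ` solves the Riccati equation `Φ' = (a² - Φ²) / 2`, because
`coth' = 1 - coth²`. The ODE says exactly that `(Φ' + Φ² / 2)'' = 0`, so it follows by
differentiating the Riccati equation twice. At `τp` the argument of `coth` passes through `0`,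
where `cosh → 1` while `sinh → 0`.
-/

section Riccati

variable {f : ℝ → ℝ} {U : Set ℝ} {c x : ℝ}

theorem hasDerivAt_deriv_of_riccati (hU : IsOpen U)
    (hf : ∀ y ∈ U, HasDerivAt f (c - f y ^ 2 / 2) y) (hx : x ∈ U) :
    HasDerivAt (deriv f) (-(f x * deriv f x)) x := by
  have hderiv : deriv f =ᶠ[𝓝 x] fun y => c - f y ^ 2 / 2 :=
    eventually_of_mem (hU.mem_nhds hx) fun y hy => (hf y hy).deriv
  have hrhs := ((hf x hx).pow 2).div_const 2 |>.const_sub c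
  rw [← (hf x hx).deriv] at hrhs
  exact (hrhs.congr_of_eventuallyEq hderiv).congr_deriv (by ring)

theorem deriv_deriv_deriv_add_of_riccati (hU : IsOpen U)
    (hf : ∀ y ∈ U, HasDerivAt f (c - f y ^ 2 / 2) y) (hx : x ∈ U) :
    deriv (deriv (deriv f)) x + f x * deriv (deriv f) x + deriv f x ^ 2 = 0 := by
  have hderiv2 : deriv (deriv f) =ᶠ[𝓝 x] fun y => -(f y * deriv f y) :=
    eventually_of_mem (hU.mem_nhds hx) fun y hy => (hasDerivAt_deriv_of_riccati hU hf hy).deriv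
  have hf' := hasDerivAt_deriv_of_riccati hU hf hx
  have hrhs := ((hf x hx).differentiableAt.hasDerivAt.fun_mul hf').fun_neg
  rw [hderiv2.deriv_eq, hrhs.deriv, hf'.deriv]
  ring

end Riccati

theorem hasDerivAt_cosh_div_sinh {x : ℝ} (hx : x ≠ 0) :
    HasDerivAt (fun x => cosh x / sinh x) (1 - (cosh x / sinh x) ^ 2) x := by
  have hs : sinh x ≠ 0 := sinh_ne_zero.2 hx
  exact ((hasDerivAt_cosh x).div (hasDerivAt_sinh x) hs).congr_deriv (by field_simp)

theorem tendsto_abs_cosh_div_sinh_nhdsNE_zero :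
    Tendsto (fun x => |cosh x / sinh x|) (𝓝[≠] 0) atTop := by
  have hsinh : Tendsto sinh (𝓝[≠] 0) (𝓝[≠] 0) := by
    simpa using (hasDerivAt_sinh 0).tendsto_nhdsNE (by simp)
  have hcosh : Tendsto cosh (𝓝[≠] 0) (𝓝 1) := by
    simpa using continuous_cosh.continuousAt.tendsto.mono_left (nhdsWithin_le_nhds (a := (0:ℝ)))
  refine (hcosh.pos_mul_atTop one_pos (tendsto_norm_inv_nhdsNE_zero_atTop.comp hsinh)).congr
    fun x => ?_
  simp [div_eq_mul_inv, abs_of_pos (cosh_pos x)]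

theorem coth_solves_m_half_ode_and_blows_up (a τp : ℝ) (ha : a ≠ 0) :
    let Φ : ℝ → ℝ := fun t =>
      a * (Real.cosh (a * (t - τp) / 2) / Real.sinh (a * (t - τp) / 2))
    (∀ τ : ℝ, τ ≠ τp →
      deriv (deriv (deriv Φ)) τ + Φ τ * deriv (deriv Φ) τ + (deriv Φ τ) ^ 2 = 0) ∧
    Filter.Tendsto (fun τ => |Φ τ|) (nhdsWithin τp {τp}ᶜ) Filter.atTop := by
  intro Φ
  set u : ℝ → ℝ := fun t => a * (t - τp) / 2
  have hu (t : ℝ) : HasDerivAt u (a / 2) t := by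
    simpa using (((hasDerivAt_id t).sub_const τp).const_mul a).div_const 2
  have hu_ne {t : ℝ} (ht : t ≠ τp) : u t ≠ 0 := by
    simpa [u, ha, sub_eq_zero] using ht
  have hΦ : ∀ t ∈ ({τp}ᶜ : Set ℝ), HasDerivAt Φ (a ^ 2 / 2 - Φ t ^ 2 / 2) t := fun t ht =>
    (((hasDerivAt_cosh_div_sinh (hu_ne ht)).comp t (hu t)).const_mul a).congr_deriv (by ring)
  refine ⟨fun τ hτ => deriv_deriv_deriv_add_of_riccati isOpen_compl_singleton hΦ hτ, ?_⟩
  have hu_nhdsNE : Tendsto u (𝓝[≠] τp) (𝓝[≠] 0) := by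
    simpa [u] using (hu τp).tendsto_nhdsNE (div_ne_zero ha two_ne_zero)
  refine ((tendsto_abs_cosh_div_sinh_nhdsNE_zero.comp hu_nhdsNE).const_mul_atTop
    (abs_pos.2 ha)).congr fun t => ?_
  simp [Φ, u, abs_mul]
end

section
/- For a > 0 and the limit case m → ∞, the pair ρ₁(y) = y/a², ρ₂(y) = y/a solves the Lyapunov-type system ρ₁'(y)·(a y + ρ₂(y)² − ρ₁(y)·y) = ρ₂(y) and ρ₂'(y)·(a y + ρ₂(y)² − ρ₁(y)·y) = y with ρ₁(0) = ρ₂(0) = 0. -/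
theorem lyapunov_system_exact_solution_m_infinity (a : ℝ) (ha : a > 0) :
    let ρ₁ : ℝ → ℝ := fun y => y / a ^ 2
    let ρ₂ : ℝ → ℝ := fun y => y / a
    (∀ y : ℝ, deriv ρ₁ y * (a * y + (ρ₂ y) ^ 2 - ρ₁ y * y) = ρ₂ y) ∧
    (∀ y : ℝ, deriv ρ₂ y * (a * y + (ρ₂ y) ^ 2 - ρ₁ y * y) = y) ∧
    ρ₁ 0 = 0 ∧ ρ₂ 0 = 0 := by
  intro ρ₁ ρ₂
  have ha' : a ≠ 0 := ne_of_gt ha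
  have h1 : ∀ y, deriv ρ₁ y = 1 / a ^ 2 := by
    intro y
    simp [ρ₁, div_eq_mul_inv, deriv_mul_const]
  have h2 : ∀ y, deriv ρ₂ y = 1 / a := by
    intro y
    simp [ρ₂, div_eq_mul_inv, deriv_mul_const]
  refine ⟨fun y => ?_, fun y => ?_, by simp [ρ₁], by simp [ρ₂]⟩ <;>
    simp only [h1, h2, ρ₁, ρ₂] <;> field_simp <;> ring
end
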